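/- Let X and H be Hermitian involutions with {X,H} = 0 and V(φ) = e^{i(θφ/2π)H}e^{iφX}. For a Hermitian involution g with {g, X} = 0 and [g, H] = 0, the rotated operator satisfies V(φ) g V(φ)† = cos(2φ)·g − sin(2φ)sin((θ/π)φ)·HXg + i sin(2φ)cos((θ/π)φ)·Xg, and this operator squares to the identity. -/

import Mathlib

/-!
If `M` anticommutes with `a`, then `M e^{a} = e^{-a} M`, so conjugation by `e^{a}` turns `M` into
`e^{2a} M`, while an `M` commuting with `a` is fixed. For an involution `A`,
`e^{itA} = cos t + i sin t A`. Conjugating `g` by `e^{iφX}` thus gives `cos 2φ g + i sin 2φ Xg`;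
conjugating this by `e^{iaH}`, `a = θφ/2π`, fixes `g` and, since `Xg` anticommutes with `H`,
turns `Xg` into `(cos 2a + i sin 2a H) Xg`. The conjugate squares to `1` because `V(φ)` is
unitary, as a product of exponentials of skew-adjoint matrices.
-/

open Matrix NormedSpace

theorem Complex.I_mul_ofReal_mem_skewAdjoint (t : ℝ) : Complex.I * t ∈ skewAdjoint ℂ := by
  simp [skewAdjoint.mem_iff, Complex.conj_ofReal]

theorem conj_mul_self_eq_one_of_mem_unitary {R : Type*} [Monoid R] [StarMul R] {u g : R}
    (hu : u ∈ unitary R) (hg : g * g = 1) : u * g * star u * (u * g * star u) = 1 := by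
  calc u * g * star u * (u * g * star u) = u * g * (star u * u) * g * star u := by
        simp only [mul_assoc]
    _ = 1 := by
        rw [Unitary.star_mul_self_of_mem hu, mul_one, mul_assoc u, hg, mul_one,
          Unitary.mul_star_self_of_mem hu]

section TopologicalAlgebra

variable {𝔸 : Type*} [Ring 𝔸] [TopologicalSpace 𝔸] [IsTopologicalRing 𝔸] [T2Space 𝔸]

theorem exp_smul_of_mul_self_eq_one [Algebra ℂ 𝔸] [ContinuousSMul ℂ 𝔸] {A : 𝔸}
    (hA : A * A = 1) (z : ℂ) :
    exp (z • A) = Complex.cosh z • (1 : 𝔸) + Complex.sinh z • A := by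
  have hpow_even (k : ℕ) : A ^ (2 * k) = 1 := by rw [pow_mul, sq, hA, one_pow]
  have hpow_odd (k : ℕ) : A ^ (2 * k + 1) = A := by rw [pow_succ, hpow_even, one_mul]
  have heven : HasSum (fun k ↦ ((2 * k).factorial⁻¹ : ℂ) • (z • A) ^ (2 * k))
      (Complex.cosh z • (1 : 𝔸)) := by
    refine ((Complex.hasSum_cosh z).smul_const (1 : 𝔸)).congr_fun fun k ↦ ?_
    rw [smul_pow, hpow_even, smul_smul, div_eq_inv_mul]
  have hodd : HasSum (fun k ↦ ((2 * k + 1).factorial⁻¹ : ℂ) • (z • A) ^ (2 * k + 1))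
      (Complex.sinh z • A) := by
    refine ((Complex.hasSum_sinh z).smul_const A).congr_fun fun k ↦ ?_
    rw [smul_pow, hpow_odd, smul_smul, div_eq_inv_mul]
  rw [exp_eq_tsum ℂ]
  exact (HasSum.even_add_odd (f := fun n ↦ (n.factorial⁻¹ : ℂ) • (z • A) ^ n) heven hodd).tsum_eq

theorem exp_I_mul_smul_of_mul_self_eq_one [Algebra ℂ 𝔸] [ContinuousSMul ℂ 𝔸] {A : 𝔸}
    (hA : A * A = 1) (t : ℂ) :
    exp ((Complex.I * t) • A) = Complex.cos t • (1 : 𝔸) + (Complex.I * Complex.sin t) • A := by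
  rw [exp_smul_of_mul_self_eq_one hA, mul_comm, Complex.cosh_mul_I, Complex.sinh_mul_I, mul_comm]

theorem star_exp_of_mem_skewAdjoint [StarRing 𝔸] [ContinuousStar 𝔸] {x : 𝔸}
    (hx : x ∈ skewAdjoint 𝔸) : star (exp x) = exp (-x) := by
  rw [star_exp, skewAdjoint.mem_iff.mp hx]

end TopologicalAlgebra

section NormedAlgebra

variable {𝔸 : Type*} [NormedRing 𝔸] [NormedAlgebra ℚ 𝔸] [CompleteSpace 𝔸]

theorem Commute.exp_mul_mul_exp_neg {a x : 𝔸} (h : Commute a x) :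
    NormedSpace.exp a * x * NormedSpace.exp (-a) = x := by
  simpa only [neg_neg] using h.symm.neg_right.exp_neg_mul_mul_exp_eq_self

theorem exp_mul_mul_exp_neg_of_anticommute {a x : 𝔸} (h : x * a = -(a * x)) :
    exp a * x * exp (-a) = exp (2 • a) * x := by
  have hsemiconj : SemiconjBy x (-a) a := by rw [SemiconjBy, mul_neg, h, neg_neg]
  rw [mul_assoc, hsemiconj.exp_right.eq, ← mul_assoc, ← sq, NormedSpace.exp_nsmul]

-- The general theory of `exp` is stated for `ℚ`-algebras, the closed form above for `ℂ`-algebras.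
variable [NormedAlgebra ℂ 𝔸]

theorem exp_I_mul_smul_conj_of_anticommute {A M : 𝔸} (hA : A * A = 1)
    (hMA : M * A = -(A * M)) (t : ℂ) :
    exp ((Complex.I * t) • A) * M * exp (-((Complex.I * t) • A)) =
      Complex.cos (2 * t) • M + (Complex.I * Complex.sin (2 * t)) • (A * M) := by
  rw [exp_mul_mul_exp_neg_of_anticommute (by rw [mul_smul_comm, hMA, smul_neg, smul_mul_assoc]),
    two_nsmul, ← add_smul, ← mul_add, ← two_mul, exp_I_mul_smul_of_mul_self_eq_one hA, add_mul,
    smul_mul_assoc, smul_mul_assoc, one_mul]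

theorem exp_mul_exp_conj_of_anticommute {X H g : 𝔸} (hX : X * X = 1) (hH : H * H = 1)
    (hgX : g * X = -(X * g)) (hgH : g * H = H * g) (hXH : X * H = -(H * X)) (s t : ℂ) :
    exp ((Complex.I * t) • H) * exp ((Complex.I * s) • X) * g *
        (exp (-((Complex.I * s) • X)) * exp (-((Complex.I * t) • H))) =
      Complex.cos (2 * s) • g - (Complex.sin (2 * s) * Complex.sin (2 * t)) • (H * X * g) +
        (Complex.I * (Complex.sin (2 * s) * Complex.cos (2 * t))) • (X * g) := by
  have hXgH : X * g * H = -(H * (X * g)) := by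
    rw [mul_assoc, hgH, ← mul_assoc, hXH, neg_mul, mul_assoc]
  have hHg : Commute ((Complex.I * t) • H) g := (Commute.symm hgH).smul_left _
  calc _ = exp ((Complex.I * t) • H) *
        (exp ((Complex.I * s) • X) * g * exp (-((Complex.I * s) • X))) *
          exp (-((Complex.I * t) • H)) := by
        simp only [mul_assoc]
    _ = Complex.cos (2 * s) • g + (Complex.I * Complex.sin (2 * s)) •
        (Complex.cos (2 * t) • (X * g) + (Complex.I * Complex.sin (2 * t)) • (H * (X * g))) := by
        rw [exp_I_mul_smul_conj_of_anticommute hX hgX, mul_add, add_mul, mul_smul_comm,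
          smul_mul_assoc, mul_smul_comm, smul_mul_assoc, hHg.exp_mul_mul_exp_neg,
          exp_I_mul_smul_conj_of_anticommute hH hXgH]
    _ = _ := by
        rw [mul_assoc H]
        linear_combination (norm := module)
          (Complex.sin (2 * s) * Complex.sin (2 * t)) • Complex.I_mul_I • (H * (X * g))

end NormedAlgebra

theorem Matrix.exp_mem_unitary_of_mem_skewAdjoint {m 𝔸 : Type*} [Fintype m] [DecidableEq m]
    [NormedRing 𝔸] [NormedAlgebra ℚ 𝔸] [CompleteSpace 𝔸] [StarRing 𝔸] [ContinuousStar 𝔸]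
    {A : Matrix m m 𝔸} (hA : A ∈ skewAdjoint (Matrix m m 𝔸)) :
    exp A ∈ unitary (Matrix m m 𝔸) := by
  rw [Unitary.mem_iff, star_exp, skewAdjoint.mem_iff.mp hA,
    ← Matrix.exp_add_of_commute _ _ (Commute.refl A).neg_left,
    ← Matrix.exp_add_of_commute _ _ (Commute.refl A).neg_right, neg_add_cancel, add_neg_cancel,
    exp_zero, and_self]

theorem rotated_stabilizer_formula_general {N : ℕ} (θ : ℝ)
    (g X H : Matrix (Fin N) (Fin N) ℂ)
    (hX_herm : Xᴴ = X) (hH_herm : Hᴴ = H)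
    (hg2 : g * g = 1) (hX2 : X * X = 1) (hH2 : H * H = 1)
    (hgX : g * X = -(X * g)) (hgH : g * H = H * g)
    (hXH : X * H = -(H * X))
    (V : ℝ → Matrix (Fin N) (Fin N) ℂ)
    (hVdef : ∀ φ, V φ =
      NormedSpace.exp ((Complex.I * (θ * φ / (2 * Real.pi))) • H) *
        NormedSpace.exp ((Complex.I * φ) • X)) :
    ∀ φ : ℝ,
      (V φ * g * (V φ)ᴴ =
        ((Real.cos (2 * φ) : ℝ) : ℂ) • g -
          ((Real.sin (2 * φ) * Real.sin (θ / Real.pi * φ) : ℝ) : ℂ) •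
            (H * X * g) +
          (Complex.I * ((Real.sin (2 * φ) * Real.cos (θ / Real.pi * φ) : ℝ) : ℂ)) •
            (X * g)) ∧
      (V φ * g * (V φ)ᴴ) * (V φ * g * (V φ)ᴴ) = 1 := by
  intro φ
  set a : ℝ := θ * φ / (2 * Real.pi)
  have hx := IsSelfAdjoint.smul_mem_skewAdjoint (Complex.I_mul_ofReal_mem_skewAdjoint φ) hX_herm
  have hy := IsSelfAdjoint.smul_mem_skewAdjoint (Complex.I_mul_ofReal_mem_skewAdjoint a) hH_herm
  have hV : V φ = exp ((Complex.I * a) • H) * exp ((Complex.I * φ) • X) := by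
    rw [hVdef, Complex.ofReal_div]; push_cast; rfl
  have hVstar : (V φ)ᴴ = exp (-((Complex.I * φ) • X)) * exp (-((Complex.I * a) • H)) := by
    rw [hV, conjTranspose_mul, ← star_eq_conjTranspose, ← star_eq_conjTranspose,
      star_exp_of_mem_skewAdjoint hx, star_exp_of_mem_skewAdjoint hy]
  have hV_unitary : V φ ∈ unitary (Matrix (Fin N) (Fin N) ℂ) := hV ▸
    mul_mem (Matrix.exp_mem_unitary_of_mem_skewAdjoint hy)
      (Matrix.exp_mem_unitary_of_mem_skewAdjoint hx)
  refine ⟨?_, conj_mul_self_eq_one_of_mem_unitary hV_unitary hg2⟩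
  rw [hVstar, hV, show θ / Real.pi * φ = 2 * a by simp only [a]; field_simp]
  push_cast
  -- `exp` does not depend on the norm; the operator norm makes the matrices a Banach algebra.
  open scoped Matrix.Norms.Operator in
  exact exp_mul_exp_conj_of_anticommute hX2 hH2 hgX hgH hXH φ a

/-- Conjugation of a stabilizer `g` (with `{g,X} = 0`, `[g,H] = 0`) by
`V(φ) = e^{i(θφ/2π)H} e^{iφX}`:
`V g Vᴴ = cos(2φ)·g − sin(2φ)sin((θ/π)φ)·HXg + i sin(2φ)cos((θ/π)φ)·Xg`,
and the result squares to the identity. -/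
theorem rotated_stabilizer_formula {N : ℕ} (θ : ℝ)
    (g X H : Matrix (Fin N) (Fin N) ℂ)
    (hg_herm : gᴴ = g) (hX_herm : Xᴴ = X) (hH_herm : Hᴴ = H)
    (hg2 : g * g = 1) (hX2 : X * X = 1) (hH2 : H * H = 1)
    (hgX : g * X = -(X * g)) (hgH : g * H = H * g)
    (hXH : X * H = -(H * X))
    (V : ℝ → Matrix (Fin N) (Fin N) ℂ)
    (hVdef : ∀ φ, V φ =
      NormedSpace.exp ((Complex.I * (θ * φ / (2 * Real.pi))) • H) *
        NormedSpace.exp ((Complex.I * φ) • X)) :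
    ∀ φ : ℝ,
      (V φ * g * (V φ)ᴴ =
        ((Real.cos (2 * φ) : ℝ) : ℂ) • g -
          ((Real.sin (2 * φ) * Real.sin (θ / Real.pi * φ) : ℝ) : ℂ) •
            (H * X * g) +
          (Complex.I * ((Real.sin (2 * φ) * Real.cos (θ / Real.pi * φ) : ℝ) : ℂ)) •
            (X * g)) ∧
      (V φ * g * (V φ)ᴴ) * (V φ * g * (V φ)ᴴ) = 1 :=
  rotated_stabilizer_formula_general θ g X H hX_herm hH_herm hg2 hX2 hH2 hgX hgH hXH V hVdef
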